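/- Let f̃ be a homeomorphism of à = ℝ×[0,1] commuting with the unit horizontal translation and let B⁻ ⊆ (-∞,0]×[0,1] be a closed set with f̃(B⁻) ⊆ B⁻. Suppose there exists N₁ > 0 with f̃^{N₁}(B⁻) ⊆ B⁻ - (1,0). Then for every z ∈ B⁻, limsup_{n→∞} (p₁(f̃ⁿ(z)) - p₁(z))/n ≤ -1/N₁, where p₁ denotes the first-coordinate projection. -/

import Mathlib

open Set Filter

abbrev Strip := ℝ × (Set.Icc (0:ℝ) 1)

/-- Horizontal translation by 1 on the strip. -/
def T (p : Strip) : Strip := (p.1 + 1, p.2)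

/-- Horizontal translation by an integer `k`. -/
def TrZ (k : ℤ) (p : Strip) : Strip := (p.1 + k, p.2)

lemma TrZ_comp (a b : ℤ) (p : Strip) : TrZ a (TrZ b p) = TrZ (a + b) p := by
  simp [TrZ]; push_cast; ring

lemma commZ (f : Strip ≃ₜ Strip) (hcomm : ∀ p, f (T p) = T (f p)) :
    ∀ (k : ℤ) (p : Strip), f (TrZ k p) = TrZ k (f p) := by
  have key : ∀ (k : ℤ) (p : Strip), TrZ (k + 1) p = T (TrZ k p) := by
    intro k p; simp only [T, TrZ]; norm_num; ring_nf
  have Tinj : Function.Injective T := by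
    intro a b h
    simp only [T, Prod.mk.injEq] at h
    exact Prod.ext (by linarith [h.1]) h.2
  intro k
  induction k using Int.induction_on with
  | zero => intro p; simp [TrZ]
  | succ k ih => intro p; rw [key, hcomm, ih, ← key]
  | pred k ih =>
      intro p
      apply Tinj
      rw [← key, ← hcomm]
      have : (-(k:ℤ) - 1 + 1) = -(k:ℤ) := by ring
      rw [this]
      have h2 : T (TrZ (-(k:ℤ) - 1) p) = TrZ (-(k:ℤ)) p := by rw [← key, this]
      rw [h2, ih]

lemma iter_commZ (f : Strip ≃ₜ Strip) (hcomm : ∀ p, f (T p) = T (f p))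
    (n : ℕ) (k : ℤ) (p : Strip) : (⇑f)^[n] (TrZ k p) = TrZ k ((⇑f)^[n] p) := by
  induction n with
  | zero => simp
  | succ n ih => rw [Function.iterate_succ_apply', ih, commZ f hcomm, Function.iterate_succ_apply']

lemma iter_mem (f : Strip ≃ₜ Strip) (B : Set Strip) (hBinv : ⇑f '' B ⊆ B)
    (n : ℕ) {p : Strip} (hp : p ∈ B) : (⇑f)^[n] p ∈ B := by
  induction n with
  | zero => simpa
  | succ n ih => rw [Function.iterate_succ_apply']; exact hBinv ⟨_, ih, rfl⟩

theorem stmt9 (f : Strip ≃ₜ Strip)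
    (hcomm : ∀ p, f (T p) = T (f p))
    (B : Set Strip) (hBclosed : IsClosed B)
    (hBleft : B ⊆ {p : Strip | p.1 ≤ 0})
    (hBinv : ⇑f '' B ⊆ B)
    (N₁ : ℕ) (hN₁ : 0 < N₁)
    (hstep : (⇑f)^[N₁] '' B ⊆ TrZ (-1) '' B)
    (z : Strip) (hz : z ∈ B) :
    Filter.limsup (fun n : ℕ => (((⇑f)^[n] z).1 - z.1) / (n : ℝ)) Filter.atTop
      ≤ -(1 / (N₁ : ℝ)) := by
  -- displacement bound
  set d : Strip → ℝ := fun p => (f p).1 - p.1 with hd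
  have hdcont : Continuous d := (continuous_fst.comp f.continuous).sub continuous_fst
  have hK : IsCompact ((Icc (0:ℝ) 1) ×ˢ (univ : Set (Icc (0:ℝ) 1))) :=
    isCompact_Icc.prod isCompact_univ
  obtain ⟨C, hC⟩ := hK.exists_bound_of_continuousOn hdcont.continuousOn
  have hdTrZ : ∀ (k : ℤ) (p : Strip), d (TrZ k p) = d p := by
    intro k p
    show (f (TrZ k p)).1 - (TrZ k p).1 = (f p).1 - p.1
    rw [commZ f hcomm]
    simp only [TrZ]
    ring
  have hCall : ∀ p : Strip, |d p| ≤ C := by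
    intro p
    have h1 : TrZ ⌊p.1⌋ (TrZ (-⌊p.1⌋) p) = p := by
      rw [TrZ_comp]; simp [TrZ]
    have h2 : TrZ (-⌊p.1⌋) p ∈ (Icc (0:ℝ) 1) ×ˢ (univ : Set (Icc (0:ℝ) 1)) := by
      constructor
      · simp only [TrZ]
        constructor
        · push_cast; linarith [Int.floor_le p.1]
        · push_cast; linarith [Int.lt_floor_add_one p.1]
      · trivial
    have h3 := hdTrZ ⌊p.1⌋ (TrZ (-⌊p.1⌋) p)
    rw [h1] at h3
    calc |d p| = |d (TrZ (-⌊p.1⌋) p)| := by rw [h3]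
      _ ≤ C := by simpa using hC _ h2
  have hC0 : 0 ≤ C := le_trans (abs_nonneg _) (hCall z)
  -- lower bound on iterates
  have hlow : ∀ n : ℕ, z.1 - C * n ≤ ((⇑f)^[n] z).1 := by
    intro n
    induction n with
    | zero => simp
    | succ n ih =>
        rw [Function.iterate_succ_apply']
        have := (abs_le.mp (hCall ((⇑f)^[n] z))).1
        have hdef : (f ((⇑f)^[n] z)).1 = ((⇑f)^[n] z).1 + d ((⇑f)^[n] z) := by
          simp [hd]
        rw [hdef]
        push_cast
        linarith
  -- key iteration
  have hiter : ∀ (k : ℕ) (w : Strip), w ∈ B → ∃ w' ∈ B, (⇑f)^[N₁ * k] w = TrZ (-(k:ℤ)) w' := by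
    intro k
    induction k with
    | zero => intro w hw; exact ⟨w, hw, by simp [TrZ]⟩
    | succ k ih =>
        intro w hw
        obtain ⟨w', hw', hww'⟩ := ih w hw
        obtain ⟨w'', hw'', hww''⟩ := hstep ⟨w', hw', rfl⟩
        refine ⟨w'', hw'', ?_⟩
        have : N₁ * (k + 1) = N₁ + N₁ * k := by ring
        rw [this, Function.iterate_add_apply, hww', iter_commZ f hcomm, ← hww'', TrZ_comp]
        congr 1
        push_cast; ring
  -- upper bound on first coordinates
  have hup : ∀ n : ℕ, ((⇑f)^[n] z).1 ≤ -(((n / N₁ : ℕ)) : ℝ) := by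
    intro n
    obtain ⟨w', hw', hww'⟩ := hiter (n / N₁) z hz
    have hsplit : n = N₁ * (n / N₁) + n % N₁ := (Nat.div_add_mod n N₁).symm
    have : (⇑f)^[n] z = TrZ (-(((n / N₁ : ℕ)) : ℤ)) ((⇑f)^[n % N₁] w') := by
      conv_lhs => rw [hsplit]
      rw [add_comm, Function.iterate_add_apply, hww', iter_commZ f hcomm]
    rw [this]
    have hmem : (⇑f)^[n % N₁] w' ∈ B := iter_mem f B hBinv _ hw'
    have hle0 := hBleft hmem
    simp only [TrZ, mem_setOf_eq] at hle0 ⊢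
    have hcast : (((-((n / N₁ : ℕ) : ℤ)) : ℤ) : ℝ) = -(((n / N₁ : ℕ)) : ℝ) := by
      norm_cast
    rw [hcast]
    linarith
  -- eventual bound
  have hbound : ∀ n : ℕ, 1 ≤ n →
      (((⇑f)^[n] z).1 - z.1) / (n : ℝ) ≤ -(1 / (N₁ : ℝ)) + (1 - z.1) / n := by
    intro n hn
    have hnpos : (0:ℝ) < n := by exact_mod_cast hn
    have hN : (0:ℝ) < N₁ := by exact_mod_cast hN₁
    have hk : (n : ℝ) / N₁ - 1 < ((n / N₁ : ℕ) : ℝ) := by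
      have : n < N₁ * (n / N₁ + 1) := Nat.lt_mul_div_succ n hN₁
      have h2 : (n : ℝ) < N₁ * ((n / N₁ : ℕ) + 1) := by exact_mod_cast this
      rw [div_sub_one hN.ne', div_lt_iff₀ hN]
      nlinarith
    have h1 : ((⇑f)^[n] z).1 - z.1 ≤ -((n:ℝ)/N₁ - 1) - z.1 := by
      have := hup n
      linarith
    calc (((⇑f)^[n] z).1 - z.1) / (n : ℝ) ≤ (-((n:ℝ)/N₁ - 1) - z.1) / n :=
          (div_le_div_iff_of_pos_right hnpos).mpr h1
      _ = -(1 / (N₁ : ℝ)) + (1 - z.1) / n := by field_simp; ring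
  -- conclude
  have htend : Tendsto (fun n : ℕ => -(1 / (N₁ : ℝ)) + (1 - z.1) / n) atTop
      (nhds (-(1 / (N₁ : ℝ)) + 0)) :=
    tendsto_const_nhds.add (tendsto_const_div_atTop_nhds_zero_nat _)
  rw [add_zero] at htend
  have hle : limsup (fun n : ℕ => (((⇑f)^[n] z).1 - z.1) / (n : ℝ)) atTop
      ≤ limsup (fun n : ℕ => -(1 / (N₁ : ℝ)) + (1 - z.1) / n) atTop := by
    apply limsup_le_limsup
    · filter_upwards [eventually_ge_atTop 1] with n hn using hbound n hn
    · apply isCoboundedUnder_le_of_le atTop (x := -C)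
      intro n
      rcases Nat.eq_zero_or_pos n with rfl | hn
      · simp; linarith
      · have hnpos : (0:ℝ) < n := by exact_mod_cast hn
        have := hlow n
        rw [le_div_iff₀ hnpos]
        nlinarith
    · exact htend.isBoundedUnder_le
  exact hle.trans_eq htend.limsup_eq
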